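/- Let L > 0 and d > 0. There exists a constant C > 0, depending only on L and d, with the following property: for every σ > 0, every P > 0, every h_L > 0, every continuously differentiable m : [0,L] → ℝ with m(0) = 0, every continuous n : [0,L] → ℝ, and every twice continuously differentiable q : [0,L] → ℝ satisfying −q''(x) + (1 + 2d + d²)·q(x) = n(x) + (1 + 2d)·m(x) on [0,L], q(0) = 0, and q'(L) = −h_L·P·α_σ((1 + d)·q(L) − m(L)), one has |α_σ((1 + d)·q(L) − m(L))| ≤ (C/(h_L·P))·((∫₀ᴸ (m² + m'²) dx)^{1/2} + (∫₀ᴸ n² dx)^{1/2}). -/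

import Mathlib

noncomputable def yosidaSign (σ x : ℝ) : ℝ := if |x| ≤ σ then x / σ else x / |x|

lemma yosidaSign_mul_nonneg {σ : ℝ} (hσ : 0 < σ) (x : ℝ) : 0 ≤ x * yosidaSign σ x := by
  unfold yosidaSign
  split_ifs with h
  · have : x * (x/σ) = x^2/σ := by ring
    rw [this]; positivity
  · have : x * (x/|x|) = x^2/|x| := by ring
    rw [this]; positivity

lemma ptwise (d a b c e ν : ℝ) (hd : 0 < d) :
  (1/4)*a^2 + (1/4)*b^2 - 8*(1+d)^4*(c^2+e^2+ν^2) ≤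
  a*((1+d)*a - e) + ((1+2*d+d^2)*b - (ν + (1+2*d)*c))*((1+d)*b - c) := by
  have f9 : (0:ℝ) ≤ (8*(1+d)^4 - 7*(1+d) - 1) := by nlinarith [hd, sq_nonneg d, sq_nonneg (d*d)]
  nlinarith [sq_nonneg (a-e), mul_nonneg hd.le (sq_nonneg a),
    mul_nonneg (by positivity : (0:ℝ) ≤ 1+d) (sq_nonneg ((1+d)*b - 4*c)),
    mul_nonneg (by positivity : (0:ℝ) ≤ 1+d) (sq_nonneg ((1+d)*b + 4*c)),
    sq_nonneg ((1+d)*b - 4*ν), sq_nonneg ((1+d)*b + 4*ν), sq_nonneg (ν + c),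
    mul_nonneg hd.le (sq_nonneg ((1+d)*b)),
    mul_nonneg f9 (sq_nonneg c),
    mul_nonneg (by nlinarith [hd, sq_nonneg d, sq_nonneg (d*d)] : (0:ℝ) ≤ 8*(1+d)^4 - 3) (sq_nonneg ν),
    mul_nonneg (by nlinarith [hd, sq_nonneg d, sq_nonneg (d*d)] : (0:ℝ) ≤ 8*(1+d)^4 - 1) (sq_nonneg e)]

lemma ptwise2 (d b c ν : ℝ) (hd : 0 < d) :
  ((1+2*d+d^2)*b - (ν + (1+2*d)*c))^2 ≤ 2*(1+d)^4*b^2 + 8*(1+d)^4*(c^2 + ν^2) := by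
  nlinarith [sq_nonneg ((1+2*d+d^2)*b + (ν + (1+2*d)*c)), sq_nonneg (ν - (1+2*d)*c),
    sq_nonneg (ν + (1+2*d)*c), mul_nonneg hd.le (sq_nonneg ν), mul_nonneg hd.le (sq_nonneg c),
    mul_nonneg hd.le (sq_nonneg (d*c)), sq_nonneg (d*c), sq_nonneg (d*ν),
    mul_nonneg (mul_nonneg hd.le hd.le) (sq_nonneg c),
    mul_nonneg (mul_nonneg hd.le hd.le) (sq_nonneg ν),
    mul_nonneg (mul_nonneg (mul_nonneg hd.le hd.le) hd.le) (sq_nonneg c),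
    mul_nonneg (mul_nonneg (mul_nonneg (mul_nonneg hd.le hd.le) hd.le) hd.le) (sq_nonneg c)]

set_option maxHeartbeats 1000000 in
/-- uniform-in-σ bound on the boundary Yosida term for solutions of the
regularized resolvent boundary value problem in the Dirichlet–Neumann case. -/
theorem uniform_yosida_bound_dirichlet_neumann
    (L d : ℝ) (hL : 0 < L) (hd : 0 < d) :
    ∃ C : ℝ, 0 < C ∧
      ∀ σ P hL_ : ℝ, 0 < σ → 0 < P → 0 < hL_ →
      ∀ m n q : ℝ → ℝ,
        ContDiff ℝ 1 m → m 0 = 0 → Continuous n → ContDiff ℝ 2 q →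
        (∀ x ∈ Set.Icc (0:ℝ) L,
          -(deriv (deriv q) x) + (1 + 2 * d + d^2) * q x
            = n x + (1 + 2 * d) * m x) →
        q 0 = 0 →
        deriv q L = -(hL_ * P) * yosidaSign σ ((1 + d) * q L - m L) →
        |yosidaSign σ ((1 + d) * q L - m L)|
          ≤ (C / (hL_ * P))
              * (Real.sqrt (∫ x in (0:ℝ)..L, ((m x)^2 + (deriv m x)^2))
                + Real.sqrt (∫ x in (0:ℝ)..L, (n x)^2)) := by
  refine ⟨Real.sqrt ((1/L+1)*32*(1+d)^4 + 64*(1+d)^8 + 8*(1+d)^4), Real.sqrt_pos.mpr (by positivity), ?_⟩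
  set C0 : ℝ := (1/L+1)*32*(1+d)^4 + 64*(1+d)^8 + 8*(1+d)^4 with hC0def
  have hC0 : 0 < C0 := by positivity
  intro σ P hP σpos Ppos hPpos m n q hm hm0 hn hq heq hq0 hqL
  -- regularity facts
  have hq' : Differentiable ℝ q ∧ ContDiff ℝ 1 (deriv q) := by
    rw [← one_add_one_eq_two, contDiff_succ_iff_deriv] at hq
    exact ⟨hq.1, hq.2.2⟩
  have hqd : Differentiable ℝ q := hq'.1
  have hq'd : Differentiable ℝ (deriv q) := hq'.2.differentiable one_ne_zero
  have hq''c : Continuous (deriv (deriv q)) := (contDiff_one_iff_deriv.mp hq'.2).2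
  have hq'c : Continuous (deriv q) := hq'd.continuous
  have hqc : Continuous q := hqd.continuous
  have hmd : Differentiable ℝ m := hm.differentiable one_ne_zero
  have hmc : Continuous m := hmd.continuous
  have hm'c : Continuous (deriv m) := (contDiff_one_iff_deriv.mp hm).2
  -- notation
  set α := yosidaSign σ ((1 + d) * q L - m L) with hα
  set W : ℝ → ℝ := fun x => (1+d) * q x - m x with hW
  have hWc : Continuous W := (continuous_const.mul hqc).sub hmc
  have hW'c : Continuous (fun x => (1+d) * deriv q x - deriv m x) :=
    (continuous_const.mul hq'c).sub hm'c
  -- integration by parts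
  have hibp := intervalIntegral.integral_mul_deriv_eq_deriv_mul
    (u := deriv q) (v := W) (u' := deriv (deriv q))
    (v' := fun x => (1+d) * deriv q x - deriv m x) (a := 0) (b := L)
    (fun x _ => (hq'd x).hasDerivAt)
    (fun x _ => (((hqd x).hasDerivAt.const_mul (1+d)).sub (hmd x).hasDerivAt))
    (hq''c.intervalIntegrable 0 L) (hW'c.intervalIntegrable 0 L)
  have hW0 : W 0 = 0 := by simp [hW, hq0, hm0]
  -- replace q'' using the equation
  have hcongr : (∫ x in (0:ℝ)..L, deriv (deriv q) x * W x)
      = ∫ x in (0:ℝ)..L, ((1+2*d+d^2) * q x - (n x + (1+2*d)*m x)) * W x := by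
    apply intervalIntegral.integral_congr
    intro x hx
    rw [Set.uIcc_of_le hL.le] at hx
    have h := heq x hx
    have : deriv (deriv q) x = (1+2*d+d^2) * q x - (n x + (1+2*d)*m x) := by linarith
    simp only [this]
  -- sign of the boundary term
  have hbnd : deriv q L * W L ≤ 0 := by
    have hy : 0 ≤ ((1+d) * q L - m L) * α := yosidaSign_mul_nonneg σpos _
    have hWL : W L = (1+d) * q L - m L := rfl
    rw [hqL, hWL]
    nlinarith [mul_pos hPpos Ppos]
  -- the combined identity
  have hid : (∫ x in (0:ℝ)..L, (deriv q x * ((1+d) * deriv q x - deriv m x)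
        + ((1+2*d+d^2) * q x - (n x + (1+2*d)*m x)) * W x)) = deriv q L * W L := by
    rw [intervalIntegral.integral_add
      ((hq'c.fun_mul hW'c).intervalIntegrable 0 L)
      ((((continuous_const.fun_mul hqc).fun_sub (hn.fun_add (continuous_const.fun_mul hmc))).fun_mul hWc).intervalIntegrable 0 L),
      ← hcongr]
    rw [hibp, hW0]
    ring
  -- pointwise bound integrated
  set S : ℝ := ∫ x in (0:ℝ)..L, ((m x)^2 + (deriv m x)^2 + (n x)^2) with hSdef
  set I1 : ℝ := ∫ x in (0:ℝ)..L, (deriv q x)^2 with hI1def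
  set I2 : ℝ := ∫ x in (0:ℝ)..L, (q x)^2 with hI2def
  have hSnn : 0 ≤ S := intervalIntegral.integral_nonneg hL.le (fun x _ => by positivity)
  have hI1nn : 0 ≤ I1 := intervalIntegral.integral_nonneg hL.le (fun x _ => by positivity)
  have hI2nn : 0 ≤ I2 := intervalIntegral.integral_nonneg hL.le (fun x _ => by positivity)
  have henergy : (1/4)*I1 + (1/4)*I2 - 8*(1+d)^4*S ≤ 0 := by
    have hmono : (∫ x in (0:ℝ)..L, ((1/4)*(deriv q x)^2 + (1/4)*(q x)^2
          - 8*(1+d)^4*((m x)^2 + (deriv m x)^2 + (n x)^2)))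
        ≤ ∫ x in (0:ℝ)..L, (deriv q x * ((1+d) * deriv q x - deriv m x)
          + ((1+2*d+d^2) * q x - (n x + (1+2*d)*m x)) * W x) := by
      apply intervalIntegral.integral_mono_on hL.le
      · exact (Continuous.intervalIntegrable (by fun_prop) 0 L)
      · exact (Continuous.intervalIntegrable (by fun_prop) 0 L)
      · intro x _
        exact ptwise d (deriv q x) (q x) (m x) (deriv m x) (n x) hd
    rw [hid] at hmono
    have hsplit : (∫ x in (0:ℝ)..L, ((1/4)*(deriv q x)^2 + (1/4)*(q x)^2
          - 8*(1+d)^4*((m x)^2 + (deriv m x)^2 + (n x)^2)))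
        = (1/4)*I1 + (1/4)*I2 - 8*(1+d)^4*S := by
      rw [hI1def, hI2def, hSdef, ← intervalIntegral.integral_const_mul,
        ← intervalIntegral.integral_const_mul, ← intervalIntegral.integral_const_mul,
        ← intervalIntegral.integral_add
          ((Continuous.intervalIntegrable (by fun_prop) 0 L))
          ((Continuous.intervalIntegrable (by fun_prop) 0 L)),
        ← intervalIntegral.integral_sub
          ((Continuous.intervalIntegrable (by fun_prop) 0 L))
          ((Continuous.intervalIntegrable (by fun_prop) 0 L))]
    rw [hsplit] at hmono
    exact hmono.trans hbnd
  have hI1S : I1 ≤ 32*(1+d)^4*S := by linarith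
  have hI2S : I2 ≤ 32*(1+d)^4*S := by linarith
  -- bound on ∫ q''^2
  set J : ℝ := ∫ x in (0:ℝ)..L, (deriv (deriv q) x)^2 with hJdef
  have hJS : J ≤ 64*(1+d)^8*S + 8*(1+d)^4*S := by
    have hJeq : J = ∫ x in (0:ℝ)..L, ((1+2*d+d^2) * q x - (n x + (1+2*d)*m x))^2 := by
      apply intervalIntegral.integral_congr
      intro x hx
      rw [Set.uIcc_of_le hL.le] at hx
      have h := heq x hx
      have : deriv (deriv q) x = (1+2*d+d^2) * q x - (n x + (1+2*d)*m x) := by linarith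
      simp only [this]
    have hmono2 : (∫ x in (0:ℝ)..L, ((1+2*d+d^2) * q x - (n x + (1+2*d)*m x))^2)
        ≤ ∫ x in (0:ℝ)..L, (2*(1+d)^4*(q x)^2 + 8*(1+d)^4*((m x)^2 + (deriv m x)^2 + (n x)^2)) := by
      apply intervalIntegral.integral_mono_on hL.le
      · exact (Continuous.intervalIntegrable (by fun_prop) 0 L)
      · exact (Continuous.intervalIntegrable (by fun_prop) 0 L)
      · intro x _
        have := ptwise2 d (q x) (m x) (n x) hd
        nlinarith [sq_nonneg (deriv m x), sq_nonneg (1+d), pow_pos (by positivity : (0:ℝ) < 1+d) 4]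
    have hsplit2 : (∫ x in (0:ℝ)..L, (2*(1+d)^4*(q x)^2 + 8*(1+d)^4*((m x)^2 + (deriv m x)^2 + (n x)^2)))
        = 2*(1+d)^4*I2 + 8*(1+d)^4*S := by
      rw [hI2def, hSdef, ← intervalIntegral.integral_const_mul, ← intervalIntegral.integral_const_mul,
        ← intervalIntegral.integral_add
          ((Continuous.intervalIntegrable (by fun_prop) 0 L))
          ((Continuous.intervalIntegrable (by fun_prop) 0 L))]
    rw [hJeq]
    calc _ ≤ 2*(1+d)^4*I2 + 8*(1+d)^4*S := by rw [← hsplit2]; exact hmono2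
      _ ≤ 64*(1+d)^8*S + 8*(1+d)^4*S := by nlinarith [pow_pos (by positivity : (0:ℝ) < 1+d) 4]
  -- trace inequality: (deriv q L)^2 ≤ I1/L + I1 + J
  have htrace : (deriv q L)^2 ≤ I1/L + (I1 + J) := by
    have hptx : ∀ x ∈ Set.Icc (0:ℝ) L, (deriv q L)^2 - (I1 + J) ≤ (deriv q x)^2 := by
      intro x hx
      have hftc : (∫ t in x..L, (2 * deriv q t * deriv (deriv q) t))
          = (deriv q L)^2 - (deriv q x)^2 := by
        apply intervalIntegral.integral_eq_sub_of_hasDerivAt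
        · intro t _
          simpa [pow_one] using (hq'd t).hasDerivAt.fun_pow 2
        · exact (Continuous.intervalIntegrable (by fun_prop) x L)
      have h1 : (∫ t in x..L, (2 * deriv q t * deriv (deriv q) t))
          ≤ ∫ t in x..L, ((deriv q t)^2 + (deriv (deriv q) t)^2) := by
        apply intervalIntegral.integral_mono_on hx.2
        · exact (Continuous.intervalIntegrable (by fun_prop) x L)
        · exact (Continuous.intervalIntegrable (by fun_prop) x L)
        · intro t _
          nlinarith [sq_nonneg (deriv q t - deriv (deriv q) t)]
      have h2 : (∫ t in x..L, ((deriv q t)^2 + (deriv (deriv q) t)^2)) ≤ I1 + J := by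
        have hadd : (∫ t in (0:ℝ)..x, ((deriv q t)^2 + (deriv (deriv q) t)^2))
            + (∫ t in x..L, ((deriv q t)^2 + (deriv (deriv q) t)^2))
            = ∫ t in (0:ℝ)..L, ((deriv q t)^2 + (deriv (deriv q) t)^2) :=
          intervalIntegral.integral_add_adjacent_intervals
            (Continuous.intervalIntegrable (by fun_prop) 0 x)
            (Continuous.intervalIntegrable (by fun_prop) x L)
        have hfull : (∫ t in (0:ℝ)..L, ((deriv q t)^2 + (deriv (deriv q) t)^2)) = I1 + J := by
          rw [hI1def, hJdef, ← intervalIntegral.integral_add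
            (Continuous.intervalIntegrable (by fun_prop) 0 L)
            (Continuous.intervalIntegrable (by fun_prop) 0 L)]
        have hnn : 0 ≤ ∫ t in (0:ℝ)..x, ((deriv q t)^2 + (deriv (deriv q) t)^2) :=
          intervalIntegral.integral_nonneg hx.1 (fun t _ => by positivity)
        linarith
      linarith
    have hc := intervalIntegral.integral_mono_on hL.le
      ((intervalIntegrable_const : IntervalIntegrable (fun _ => (deriv q L)^2 - (I1+J)) MeasureTheory.volume 0 L)) (Continuous.intervalIntegrable (by fun_prop) 0 L) hptx
    rw [intervalIntegral.integral_const, smul_eq_mul, sub_zero] at hc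
    rw [← hI1def] at hc
    have := mul_le_mul_of_nonneg_left hc (le_of_lt (inv_pos.mpr hL))
    rw [div_eq_inv_mul]
    have hinv : L⁻¹ * L = 1 := inv_mul_cancel₀ (ne_of_gt hL)
    have h3 : L⁻¹ * (L * ((deriv q L)^2 - (I1 + J))) = (deriv q L)^2 - (I1 + J) := by
      rw [← mul_assoc, hinv, one_mul]
    rw [h3] at this
    linarith
  -- final square bound
  have hsq : (deriv q L)^2 ≤ C0 * S := by
    have hdiv : I1 / L ≤ 32*(1+d)^4*S / L := by gcongr
    have hexp : C0 * S = 32*(1+d)^4*S / L + (32*(1+d)^4*S + (64*(1+d)^8*S + 8*(1+d)^4*S)) := by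
      rw [hC0def]; field_simp; ring
    rw [hexp]
    linarith
  set X : ℝ := ∫ x in (0:ℝ)..L, ((m x)^2 + (deriv m x)^2) with hXdef
  set Y : ℝ := ∫ x in (0:ℝ)..L, (n x)^2 with hYdef
  have hXnn : 0 ≤ X := intervalIntegral.integral_nonneg hL.le (fun x _ => by positivity)
  have hYnn : 0 ≤ Y := intervalIntegral.integral_nonneg hL.le (fun x _ => by positivity)
  have hSsplit : S = X + Y := by
    rw [hSdef, hXdef, hYdef, ← intervalIntegral.integral_add
      (Continuous.intervalIntegrable (by fun_prop) 0 L)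
      (Continuous.intervalIntegrable (by fun_prop) 0 L)]
  have hsqrtS : Real.sqrt S ≤ Real.sqrt X + Real.sqrt Y := by
    rw [hSsplit]
    have hle : X + Y ≤ (Real.sqrt X + Real.sqrt Y)^2 := by
      nlinarith [Real.sq_sqrt hXnn, Real.sq_sqrt hYnn,
        mul_nonneg (Real.sqrt_nonneg X) (Real.sqrt_nonneg Y)]
    calc Real.sqrt (X+Y) ≤ Real.sqrt ((Real.sqrt X + Real.sqrt Y)^2) := Real.sqrt_le_sqrt hle
      _ = Real.sqrt X + Real.sqrt Y := Real.sqrt_sq (by positivity)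
  have habs : (hP*P) * |α| ≤ Real.sqrt C0 * (Real.sqrt X + Real.sqrt Y) := by
    calc (hP*P) * |α| = |deriv q L| := by
          rw [hqL, abs_mul, abs_neg, abs_of_pos (mul_pos hPpos Ppos)]
      _ ≤ Real.sqrt (C0*S) := Real.abs_le_sqrt hsq
      _ = Real.sqrt C0 * Real.sqrt S := Real.sqrt_mul hC0.le S
      _ ≤ Real.sqrt C0 * (Real.sqrt X + Real.sqrt Y) :=
          mul_le_mul_of_nonneg_left hsqrtS (Real.sqrt_nonneg _)
  rw [div_mul_eq_mul_div, le_div_iff₀ (mul_pos hPpos Ppos)]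
  linarith
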